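/- arXiv:math/0611027 — 5 statements merged into one kernel-verified Lean document; each statement's English description precedes it below -/
import Mathlib

section
/- For every real number x ≥ 4, the natural logarithm satisfies ln x = Σ_{n≥1} (1/n) Σ_{j=0}^{n} C(n,j) · C(2j,j) · (-1/x)^j, where the double series converges. -/
open Real Finset intervalIntegral Set
open scoped Interval

/-! With `u = 4 / x ∈ (0, 1]`, binomial expansion and `∫₀^π sin^(2j) = π C(2j, j) / 4^j` give
`π⁻¹ ∫₀^π (1 - u sin² θ)^n dθ = ∑ⱼ C(n, j) C(2j, j) (-u/4)^j`. Summing `(1 - u sin² θ)^n / n` over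
`n` gives `-log (u sin² θ)` pointwise; the terms are nonnegative, so sum and integral commute, and
`∫₀^π log sin = -π log 2` turns `π⁻¹ ∫₀^π -log (u sin² θ) dθ` into `log (4 / u) = log x`. -/

open MeasureTheory in
theorem intervalIntegral.hasSum_integral_of_nonneg {ι : Type*} [Countable ι] {μ : Measure ℝ}
    [NullSingletonClass μ] {a b : ℝ} {F : ι → ℝ → ℝ} {f : ℝ → ℝ}
    (hF_meas : ∀ n, AEStronglyMeasurable (F n) (μ.restrict (Ι a b)))
    (hF_nonneg : ∀ n, ∀ t ∈ uIoo a b, 0 ≤ F n t) (hf : IntervalIntegrable f μ a b)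
    (h_lim : ∀ t ∈ uIoo a b, HasSum (fun n => F n t) (f t)) :
    HasSum (fun n => ∫ t in a..b, F n t ∂μ) (∫ t in a..b, f t ∂μ) := by
  have h_ae : ∀ᵐ t ∂μ, t ∈ Ι a b → t ∈ uIoo a b :=
    (Ioo_ae_eq_Ioc (μ := μ) (a := min a b) (b := max a b)).mem_iff.mono fun t ht => ht.mpr
  -- the series dominates itself, and its sum `f` is integrable
  refine hasSum_integral_of_dominated_convergence F hF_meas ?_ ?_ ?_ ?_
  · exact fun n => h_ae.mono fun t ht ht' => (Real.norm_of_nonneg (hF_nonneg n t (ht ht'))).le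
  · exact h_ae.mono fun t ht ht' => (h_lim t (ht ht')).summable
  · exact hf.congr_uIoo fun t ht => (h_lim t ht).tsum_eq.symm
  · exact h_ae.mono fun t ht ht' => h_lim t (ht ht')

theorem prod_range_div_eq_centralBinom_div (n : ℕ) :
    ∏ i ∈ range n, (2 * (i : ℝ) + 1) / (2 * i + 2) = n.centralBinom / 4 ^ n := by
  induction n with
  | zero => simp
  | succ k ih =>
    have h : ((k : ℝ) + 1) * (k + 1).centralBinom = 2 * (2 * k + 1) * k.centralBinom := by
      exact_mod_cast Nat.succ_mul_centralBinom_succ k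
    rw [prod_range_succ, ih]
    field_simp
    linear_combination (-2 * 4 ^ k : ℝ) * h

theorem integral_sin_pow_two_mul (j : ℕ) :
    ∫ θ in 0..π, sin θ ^ (2 * j) = π * (j.centralBinom / 4 ^ j) := by
  rw [integral_sin_pow_even, prod_range_div_eq_centralBinom_div]

theorem integral_one_sub_mul_sin_sq_pow (u : ℝ) (m : ℕ) :
    ∫ θ in 0..π, (1 - u * sin θ ^ 2) ^ m
      = π * ∑ j ∈ range (m + 1), (m.choose j : ℝ) * ((2 * j).choose j : ℝ) * (-u / 4) ^ j := by
  have h_expand : ∀ θ, (1 - u * sin θ ^ 2) ^ m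
      = ∑ j ∈ range (m + 1), (m.choose j * (-u) ^ j) * sin θ ^ (2 * j) := by
    intro θ
    rw [sub_eq_neg_add, add_pow]
    refine sum_congr rfl fun j _ => ?_
    rw [pow_mul]
    ring
  simp_rw [h_expand]
  rw [integral_finsetSum fun j _ => by apply Continuous.intervalIntegrable; fun_prop, mul_sum]
  refine sum_congr rfl fun j _ => ?_
  rw [integral_const_mul, integral_sin_pow_two_mul, Nat.centralBinom_eq_two_mul_choose, div_pow]
  ring

theorem hasSum_one_sub_mul_sin_sq_pow_div {u θ : ℝ} (hu0 : 0 < u) (hu2 : u < 2)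
    (hθ : θ ∈ Ioo 0 π) :
    HasSum (fun n : ℕ => (1 - u * sin θ ^ 2) ^ (n + 1) / (n + 1)) (-log u - 2 * log (sin θ)) := by
  have hsin : 0 < sin θ := sin_pos_of_pos_of_lt_pi hθ.1 hθ.2
  have h_lt : u * sin θ ^ 2 < 2 := by nlinarith [sin_sq_le_one θ]
  have h := hasSum_pow_div_log_of_abs_lt_one (x := 1 - u * sin θ ^ 2)
    (abs_lt.2 ⟨by linarith, by linarith [show 0 < u * sin θ ^ 2 by positivity]⟩)
  rwa [sub_sub_cancel, log_mul hu0.ne' (by positivity), log_pow, Nat.cast_ofNat, neg_add,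
    ← sub_eq_add_neg] at h

theorem integral_neg_log_sub_two_mul_log_sin {u : ℝ} (hu : u ≠ 0) :
    ∫ θ in 0..π, (-log u - 2 * log (sin θ)) = π * log (4 / u) := by
  have h4 : log 4 = 2 * log 2 := by
    rw [show (4 : ℝ) = 2 ^ 2 by norm_num, log_pow, Nat.cast_ofNat]
  rw [integral_sub (g := fun θ => 2 * log (sin θ)) intervalIntegrable_const
      (intervalIntegrable_log_sin.const_mul 2),
    integral_const_mul, integral_log_sin_zero_pi, integral_const, log_div four_ne_zero hu, h4]
  simp only [sub_zero, smul_eq_mul]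
  ring

theorem hasSum_log_four_div {u : ℝ} (hu0 : 0 < u) (hu1 : u ≤ 1) :
    HasSum (fun n : ℕ => (1 / (n + 1 : ℝ)) * ∑ j ∈ range (n + 2),
        ((n + 1).choose j : ℝ) * ((2 * j).choose j : ℝ) * (-u / 4) ^ j) (log (4 / u)) := by
  set F : ℕ → ℝ → ℝ := fun n θ => (1 - u * sin θ ^ 2) ^ (n + 1) / (n + 1) with hF
  have hF_nonneg : ∀ n θ, 0 ≤ F n θ := fun n θ =>
    div_nonneg (pow_nonneg (by nlinarith [sin_sq_le_one θ]) _) (by positivity)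
  have hF_integral : ∀ n : ℕ, ∫ θ in 0..π, F n θ = π * ((1 / (n + 1 : ℝ)) *
      ∑ j ∈ range (n + 2), ((n + 1).choose j : ℝ) * ((2 * j).choose j : ℝ) * (-u / 4) ^ j) := by
    intro n
    rw [hF, intervalIntegral.integral_div, integral_one_sub_mul_sin_sq_pow]
    ring
  have h := hasSum_integral_of_nonneg (F := F) (f := fun θ => -log u - 2 * log (sin θ))
    (fun n => (by fun_prop : Continuous (F n)).aestronglyMeasurable) (fun n t _ => hF_nonneg n t)
    (intervalIntegrable_const.sub ((intervalIntegrable_log_sin (a := 0) (b := π)).const_mul 2))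
    (fun t ht => hasSum_one_sub_mul_sin_sq_pow_div hu0 (by linarith)
      (by rwa [uIoo_of_le pi_pos.le] at ht))
  rw [integral_neg_log_sub_two_mul_log_sin hu0.ne'] at h
  simp_rw [hF_integral] at h
  simpa [pi_ne_zero] using h.mul_left π⁻¹

/-- For every real `x ≥ 4`,
`ln x = Σ_{n≥1} (1/n) Σ_{j=0}^{n} C(n,j) C(2j,j) (-1/x)^j`. -/
theorem log_eq_double_series (x : ℝ) (hx : 4 ≤ x) :
    HasSum (fun n : ℕ =>
      (1 / (n + 1 : ℝ)) *
        ∑ j ∈ Finset.range (n + 2),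
          ((n + 1).choose j : ℝ) * ((2 * j).choose j : ℝ) * (-1 / x) ^ j)
      (Real.log x) := by
  have hx0 : 0 < x := by linarith
  have h := hasSum_log_four_div (u := 4 / x) (by positivity) ((div_le_one hx0).2 hx)
  rwa [div_div_cancel₀ four_ne_zero, show -(4 / x) / 4 = -1 / x by ring] at h
end

section
/- ln 4 = Σ_{n=1}^{∞} (1/n) · C(2n,n) · (1/4)^n. -/
/-!
By Wallis, `C(2n,n) / 4ⁿ = (1/π) ∫₀^π cos^{2n} t dt`, and off the zeros of `sin`,
`∑_{n≥1} cos^{2n} t / n = -log (1 - cos² t) = -2 log (sin t)`. The terms are nonnegative, so the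
series dominates its own partial sums and may be integrated termwise; since
`∫₀^π log (sin t) dt = -π log 2`, the series equals `(1/π) · 2π log 2 = log 4`.
-/

open Real Filter MeasureTheory Interval

theorem centralBinom_div_four_pow_succ (n : ℕ) :
    ((n + 1).centralBinom : ℝ) / 4 ^ (n + 1) =
      (2 * n + 1) / (2 * n + 2) * ((n.centralBinom : ℝ) / 4 ^ n) := by
  have h : ((n : ℝ) + 1) * (n + 1).centralBinom = 2 * (2 * n + 1) * n.centralBinom := by
    exact_mod_cast n.succ_mul_centralBinom_succ
  field_simp
  rw [pow_succ]
  linear_combination 2 * 4 ^ n * h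

theorem integral_cos_pow_even (n : ℕ) :
    ∫ x in 0..π, cos x ^ (2 * n) = π * ((n.centralBinom : ℝ) / 4 ^ n) := by
  induction n with
  | zero => simp
  | succ n ih =>
    rw [centralBinom_div_four_pow_succ, show 2 * (n + 1) = 2 * n + 2 by ring, integral_cos_pow,
      ih]
    simp only [sin_pi, sin_zero, mul_zero, sub_self, zero_div, zero_add, Nat.cast_mul,
      Nat.cast_ofNat]
    field_simp

theorem hasSum_cos_pow_even_div {t : ℝ} (ht : sin t ≠ 0) :
    HasSum (fun n : ℕ => cos t ^ (2 * (n + 1)) / (n + 1)) (-2 * log (sin t)) := by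
  have hcos : |cos t ^ 2| < 1 := by
    rw [abs_of_nonneg (sq_nonneg _), ← sin_sq_add_cos_sq t]
    have := pow_pos (abs_pos.2 ht) 2
    rw [sq_abs] at this
    linarith
  convert hasSum_pow_div_log_of_abs_lt_one hcos using 1
  · simp [pow_mul]
  · rw [← sin_sq, log_pow]
    push_cast
    ring

theorem ae_sin_ne_zero_of_mem_uIoc_zero_pi : ∀ᵐ t ∂volume, t ∈ Ι 0 π → sin t ≠ 0 := by
  filter_upwards [measure_eq_zero_iff_ae_notMem.1 (measure_singleton π)] with t hπ ht
  rw [Set.uIoc_of_le pi_pos.le] at ht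
  exact (sin_pos_of_pos_of_lt_pi ht.1 (lt_of_le_of_ne ht.2 hπ)).ne'

theorem hasSum_integral_cos_pow_even_div :
    HasSum (fun n : ℕ => ∫ t in 0..π, cos t ^ (2 * (n + 1)) / (n + 1)) (2 * π * log 2) := by
  set F : ℕ → ℝ → ℝ := fun n t => cos t ^ (2 * (n + 1)) / (n + 1)
  have hlim : ∀ᵐ t ∂volume, t ∈ Ι 0 π → HasSum (fun n => F n t) (-2 * log (sin t)) := by
    filter_upwards [ae_sin_ne_zero_of_mem_uIoc_zero_pi] with t ht hmem
    exact hasSum_cos_pow_even_div (ht hmem)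
  have hF_nonneg (n : ℕ) (t : ℝ) : 0 ≤ F n t := by
    simp only [F, pow_mul]
    positivity
  have key := intervalIntegral.hasSum_integral_of_dominated_convergence F
    (fun n => (by fun_prop : Continuous (F n)).aestronglyMeasurable)
    (fun n => ae_of_all _ fun t _ => (norm_of_nonneg (hF_nonneg n t)).le)
    (by filter_upwards [hlim] with t ht hmem using (ht hmem).summable)
    ?_ hlim
  · rwa [intervalIntegral.integral_const_mul, integral_log_sin_zero_pi,
      show -2 * (-log 2 * π) = 2 * π * log 2 by ring] at key
  · refine (intervalIntegrable_congr_ae ((ae_restrict_iff' measurableSet_uIoc).2 ?_)).1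
      (intervalIntegrable_log_sin.const_mul (-2))
    filter_upwards [hlim] with t ht hmem using (ht hmem).tsum_eq.symm

/-- `ln 4 = Σ_{n=1}^∞ (1/n) C(2n,n) (1/4)^n`. -/
theorem log_four_eq_series :
    HasSum (fun n : ℕ =>
      (1 / (n + 1 : ℝ)) * ((2 * (n + 1)).choose (n + 1) : ℝ) * (1 / 4 : ℝ) ^ (n + 1))
      (Real.log 4) := by
  have h := hasSum_integral_cos_pow_even_div.div_const π
  rw [show 2 * π * log 2 / π = log 4 by
    rw [show (4 : ℝ) = 2 ^ 2 by norm_num, log_pow]; field_simp; push_cast; ring] at h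
  refine h.congr_fun fun n => ?_
  rw [intervalIntegral.integral_div, integral_cos_pow_even, Nat.centralBinom_eq_two_mul_choose]
  field_simp
  rw [mul_assoc, ← mul_pow]
  norm_num
end

section
/- For real z with 0 < z ≤ 1/4, Σ_{j=1}^{∞} (1/j) · C(2j,j) · z^j = 2 · ln((1 - √(1 - 4z)) / (2z)). -/
/-!
Since `C(2n, n) / 4ⁿ = (1/2)(3/2)⋯(n - 1/2) / n!`, the series `∑ C(2n, n) xⁿ` is the
binomial series of `(1 - 4x)^(-1/2)`. Differentiating `∑_{n ≥ 1} C(2n, n) xⁿ / n` termwise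
therefore gives `(1/√(1 - 4x) - 1) / x`, which is also the derivative of
`2 log (2 / (1 + √(1 - 4x)))`; both functions vanish at `0`, so they agree on `|x| < 1/4`.
At `x = 1/4` all terms are nonnegative and increase with `x`, so the identity passes to the
limit `x → 1/4⁻` by monotone convergence.
-/

open Real Filter Topology Set

theorem hasSum_of_tendsto_of_nonneg_of_le {α ι : Type*} {l : Filter α} [l.NeBot]
    {f : ι → α → ℝ} {a : ι → ℝ} {g : α → ℝ} {L : ℝ}
    (hf : ∀ i, Tendsto (f i) l (𝓝 (a i)))
    (hbound : ∀ᶠ x in l, ∀ i, 0 ≤ f i x ∧ f i x ≤ a i)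
    (hg : ∀ᶠ x in l, HasSum (fun i ↦ f i x) (g x))
    (hL : Tendsto g l (𝓝 L)) : HasSum a L := by
  have ha : 0 ≤ a := fun i ↦ by
    obtain ⟨x, hx⟩ := hbound.exists
    exact (hx i).1.trans (hx i).2
  have hpartial (s : Finset ι) : ∑ i ∈ s, a i ≤ L :=
    le_of_tendsto_of_tendsto (tendsto_finsetSum s fun i _ ↦ hf i) hL <|
      (hbound.and hg).mono fun x ⟨hb, hx⟩ ↦ sum_le_hasSum s (fun i _ ↦ (hb i).1) hx
  have hsum : Summable a := summable_of_sum_le ha hpartial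
  have hle : L ≤ ∑' i, a i := le_of_tendsto hL <|
    (hbound.and hg).mono fun x ⟨hb, hx⟩ ↦ hasSum_le (fun i ↦ (hb i).2) hx hsum.hasSum
  exact (le_antisymm (tsum_le_of_sum_le ha hpartial) hle) ▸ hsum.hasSum

theorem four_pow_mul_ascPochhammer_eval_half {K : Type*} [Field K] [CharZero K] (n : ℕ) :
    4 ^ n * (ascPochhammer K n).eval (1 / 2) = n.factorial * n.centralBinom := by
  induction n with
  | zero => simp
  | succ n ih =>
    have h : ((n + 1 : ℕ) : K) * (n + 1).centralBinom = 2 * (2 * n + 1) * n.centralBinom := by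
      exact_mod_cast n.succ_mul_centralBinom_succ
    rw [ascPochhammer_succ_eval, Nat.factorial_succ, Nat.cast_mul]
    linear_combination (2 + 4 * n) * ih - (n.factorial : K) * h

theorem Ring.multichoose_half {K : Type*} [Field K] [CharZero K] (n : ℕ) :
    Ring.multichoose (1 / 2 : K) n = n.centralBinom / 4 ^ n := by
  have h := Ring.factorial_nsmul_multichoose_eq_ascPochhammer (1 / 2 : K) n
  rw [Polynomial.ascPochhammer_smeval_eq_eval, nsmul_eq_mul] at h
  rw [eq_div_iff (pow_ne_zero _ (by norm_num))]
  apply mul_left_cancel₀ (Nat.cast_ne_zero.mpr n.factorial_ne_zero)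
  linear_combination 4 ^ n * h + four_pow_mul_ascPochhammer_eval_half (K := K) n

theorem hasSum_centralBinom_mul_pow {x : ℝ} (hx : |x| < 1 / 4) :
    HasSum (fun n ↦ (n.centralBinom : ℝ) * x ^ n) (1 / √(1 - 4 * x)) := by
  have h4x : 4 * x ∈ Metric.eball (0 : ℝ) 1 := by
    rw [mem_eball_zero_iff, ← ofReal_norm, ENNReal.ofReal_lt_one, norm_mul, Real.norm_eq_abs,
      Real.norm_eq_abs]
    norm_num
    linarith
  have := (Real.one_div_one_sub_rpow_hasFPowerSeriesOnBall_zero (1 / 2)).hasSum h4x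
  simp only [FormalMultilinearSeries.ofScalars_apply_eq, zero_add, ← Ring.multichoose_eq,
    Ring.multichoose_half, smul_eq_mul] at this
  have hterm : (fun n ↦ (n.centralBinom : ℝ) / 4 ^ n * (4 * x) ^ n) =
      fun n ↦ (n.centralBinom : ℝ) * x ^ n := by
    funext n
    rw [mul_pow]
    field_simp
  rwa [Real.sqrt_eq_rpow, ← hterm]

theorem hasSum_centralBinom_succ_mul_pow {x : ℝ} (hx : |x| < 1 / 4) :
    HasSum (fun n ↦ ((n + 1).centralBinom : ℝ) * x ^ n)
      (4 / (√(1 - 4 * x) * (1 + √(1 - 4 * x)))) := by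
  rcases eq_or_ne x 0 with rfl | hx0
  · have h := hasSum_single (f := fun n ↦ ((n + 1).centralBinom : ℝ) * 0 ^ n) 0
      (fun n hn ↦ by simp [hn])
    norm_num [Nat.centralBinom] at h ⊢
    exact h
  have hshift := (hasSum_nat_add_iff' 1).mpr (hasSum_centralBinom_mul_pow hx)
  simp only [Finset.range_one, Finset.sum_singleton, Nat.centralBinom_zero, pow_zero,
    Nat.cast_one, mul_one] at hshift
  have hs : √(1 - 4 * x) ^ 2 = 1 - 4 * x := Real.sq_sqrt (by linarith [le_abs_self x])
  have hspos : 0 < √(1 - 4 * x) := Real.sqrt_pos.mpr (by linarith [le_abs_self x])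
  have hterm : (fun n ↦ ((n + 1).centralBinom : ℝ) * x ^ n) =
      fun n ↦ x⁻¹ * ((n + 1).centralBinom * x ^ (n + 1)) := by
    funext n
    field_simp
    ring
  have hval : 4 / (√(1 - 4 * x) * (1 + √(1 - 4 * x))) = x⁻¹ * (1 / √(1 - 4 * x) - 1) := by
    field_simp
    linear_combination hs
  rw [hterm, hval]
  exact hshift.mul_left _

noncomputable def lehmerTerm (n : ℕ) (x : ℝ) : ℝ :=
  (n + 1).centralBinom / (n + 1 : ℝ) * x ^ (n + 1)

theorem hasDerivAt_lehmerTerm (n : ℕ) (x : ℝ) :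
    HasDerivAt (lehmerTerm n) ((n + 1).centralBinom * x ^ n) x :=
  ((hasDerivAt_pow (n + 1) x).const_mul ((n + 1).centralBinom / (n + 1 : ℝ))).congr_deriv <| by
    push_cast
    field_simp

theorem norm_centralBinom_succ_mul_pow_le {n : ℕ} {x r : ℝ} (hx : |x| ≤ r) :
    ‖((n + 1).centralBinom : ℝ) * x ^ n‖ ≤ 4 * (4 * r) ^ n := by
  have hC : ((n + 1).centralBinom : ℝ) ≤ 4 ^ (n + 1) := by
    exact_mod_cast Nat.centralBinom_le_four_pow (n + 1)
  rw [norm_mul, norm_pow, Real.norm_natCast, Real.norm_eq_abs, mul_pow]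
  calc _ ≤ 4 ^ (n + 1) * r ^ n := by gcongr
    _ = _ := by ring

theorem hasSum_lehmerTerm_and_hasDerivAt {x : ℝ} (hx : |x| < 1 / 4) :
    HasSum (lehmerTerm · x) (∑' n, lehmerTerm n x) ∧
      HasDerivAt (fun y ↦ ∑' n, lehmerTerm n y)
        (4 / (√(1 - 4 * x) * (1 + √(1 - 4 * x)))) x := by
  obtain ⟨r, hxr, hr⟩ := exists_between hx
  have hu : Summable fun n : ℕ ↦ 4 * (4 * r) ^ n :=
    (summable_geometric_of_lt_one (by linarith [abs_nonneg x]) (by linarith)).mul_left 4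
  have hbound (n : ℕ) (y : ℝ) (hy : y ∈ Metric.ball 0 r) :
      ‖((n + 1).centralBinom : ℝ) * y ^ n‖ ≤ 4 * (4 * r) ^ n :=
    norm_centralBinom_succ_mul_pow_le (by simpa using (mem_ball_zero_iff.mp hy).le)
  have h0 : (0 : ℝ) ∈ Metric.ball 0 r := Metric.mem_ball_self (by linarith [abs_nonneg x])
  have hx' : x ∈ Metric.ball 0 r := mem_ball_zero_iff.mpr (by simpa using hxr)
  have hsum0 : Summable (lehmerTerm · 0) := by simp [lehmerTerm]
  refine ⟨(summable_of_summable_hasDerivAt_of_isPreconnected hu Metric.isOpen_ball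
    (convex_ball 0 r).isPreconnected (fun n y _ ↦ hasDerivAt_lehmerTerm n y) hbound h0 hsum0
    hx').hasSum, ?_⟩
  rw [← (hasSum_centralBinom_succ_mul_pow hx).tsum_eq]
  exact hasDerivAt_tsum_of_isPreconnected hu Metric.isOpen_ball
    (convex_ball 0 r).isPreconnected (fun n y _ ↦ hasDerivAt_lehmerTerm n y) hbound h0 hsum0 hx'

-- `2 log ((1 - √(1 - 4x)) / (2x))` with the fraction rationalised, which makes it smooth at `0`.
noncomputable def lehmerLog (x : ℝ) : ℝ := 2 * log (2 / (1 + √(1 - 4 * x)))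

theorem continuous_lehmerLog : Continuous lehmerLog := by
  have hpos (x : ℝ) : 0 < 1 + √(1 - 4 * x) := by positivity
  exact continuous_const.mul <| (continuous_const.div (by fun_prop) fun x ↦ (hpos x).ne').log
    fun x ↦ (div_pos two_pos (hpos x)).ne'

theorem hasDerivAt_lehmerLog {x : ℝ} (hx : x < 1 / 4) :
    HasDerivAt lehmerLog (4 / (√(1 - 4 * x) * (1 + √(1 - 4 * x)))) x := by
  have hu : 0 < 1 - 4 * x := by linarith
  have hlin : HasDerivAt (fun y ↦ 1 - 4 * y) (-4) x := by
    simpa using ((hasDerivAt_id x).const_mul 4).const_sub 1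
  have hsqrt : HasDerivAt (fun y ↦ 1 + √(1 - 4 * y)) (-2 / √(1 - 4 * x)) x :=
    ((hlin.sqrt hu.ne').const_add 1).congr_deriv (by ring)
  have hpos : 0 < 1 + √(1 - 4 * x) := by positivity
  refine ((((hasDerivAt_const x 2).div hsqrt hpos.ne').log
    (div_pos two_pos hpos).ne').const_mul 2).congr_deriv ?_
  simp only [Pi.div_apply]
  field_simp
  ring

theorem lehmerLog_zero : lehmerLog 0 = 0 := by norm_num [lehmerLog]

theorem hasSum_lehmerTerm {x : ℝ} (hx : |x| < 1 / 4) :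
    HasSum (lehmerTerm · x) (lehmerLog x) := by
  have hF (y : ℝ) (hy : y ∈ Ioo (-(1 / 4)) (1 / 4)) :=
    hasSum_lehmerTerm_and_hasDerivAt (abs_lt.mpr hy)
  have hG (y : ℝ) (hy : y ∈ Ioo (-(1 / 4) : ℝ) (1 / 4)) := hasDerivAt_lehmerLog hy.2
  have heq : EqOn (fun y ↦ ∑' n, lehmerTerm n y) lehmerLog (Ioo (-(1 / 4)) (1 / 4)) :=
    isOpen_Ioo.eqOn_of_deriv_eq isPreconnected_Ioo
      (fun y hy ↦ (hF y hy).2.differentiableAt.differentiableWithinAt)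
      (fun y hy ↦ (hG y hy).differentiableAt.differentiableWithinAt)
      (fun y hy ↦ (hF y hy).2.deriv.trans (hG y hy).deriv.symm)
      (x := 0) (by norm_num) (by simp [lehmerTerm, lehmerLog_zero])
  have hx' : x ∈ Ioo (-(1 / 4)) (1 / 4) := abs_lt.mp hx
  exact heq hx' ▸ (hF x hx').1

theorem hasSum_lehmerTerm_quarter : HasSum (lehmerTerm · (1 / 4)) (lehmerLog (1 / 4)) := by
  refine hasSum_of_tendsto_of_nonneg_of_le (l := 𝓝[<] (1 / 4)) (f := lehmerTerm) (g := lehmerLog)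
    (fun n ↦ ?_) ?_ ?_ ((continuous_lehmerLog.tendsto _).mono_left nhdsWithin_le_nhds)
  · have : Continuous (lehmerTerm n) := by unfold lehmerTerm; fun_prop
    exact (this.tendsto _).mono_left nhdsWithin_le_nhds
  · filter_upwards [Ioo_mem_nhdsLT (show (0 : ℝ) < 1 / 4 by norm_num)] with x hx n
    unfold lehmerTerm
    exact ⟨by have := hx.1; positivity, by gcongr; exacts [hx.1.le, hx.2.le]⟩
  · filter_upwards [Ioo_mem_nhdsLT (show (0 : ℝ) < 1 / 4 by norm_num)] with x hx
    exact hasSum_lehmerTerm (abs_lt.mpr ⟨by linarith [hx.1], hx.2⟩)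

theorem two_mul_log_eq_lehmerLog {z : ℝ} (hz : 0 < z) (hz' : z ≤ 1 / 4) :
    2 * log ((1 - √(1 - 4 * z)) / (2 * z)) = lehmerLog z := by
  have hs : √(1 - 4 * z) ^ 2 = 1 - 4 * z := Real.sq_sqrt (by linarith)
  have hpos : 0 < 1 + √(1 - 4 * z) := by positivity
  rw [lehmerLog]
  congr 2
  rw [div_eq_div_iff (by positivity) hpos.ne']
  linear_combination -hs

/-- Lehmer's identity: for `0 < z ≤ 1/4`,
`Σ_{j=1}^∞ (1/j) C(2j,j) z^j = 2 ln((1 - √(1-4z))/(2z))`. -/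
theorem lehmer_central_binomial_series (z : ℝ) (hz : 0 < z) (hz' : z ≤ 1 / 4) :
    HasSum (fun j : ℕ =>
      (1 / (j + 1 : ℝ)) * ((2 * (j + 1)).choose (j + 1) : ℝ) * z ^ (j + 1))
      (2 * Real.log ((1 - Real.sqrt (1 - 4 * z)) / (2 * z))) := by
  have hterm : (fun j : ℕ =>
      (1 / (j + 1 : ℝ)) * ((2 * (j + 1)).choose (j + 1) : ℝ) * z ^ (j + 1)) =
      (lehmerTerm · z) := by
    funext j
    rw [lehmerTerm, ← Nat.centralBinom_eq_two_mul_choose]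
    ring
  rw [hterm, two_mul_log_eq_lehmerLog hz hz']
  rcases hz'.lt_or_eq with hlt | rfl
  · exact hasSum_lehmerTerm (abs_lt.mpr ⟨by linarith, hlt⟩)
  · exact hasSum_lehmerTerm_quarter
end

section
/- For every natural number n ≥ 1, Σ_{j=0}^{n} C(n,j)·C(2j,j)·(−1/4)^j = C(2n,n)/4^n. -/
private lemma pascal_sum_real (n : ℕ) (g : ℕ → ℝ) :
    ∑ j ∈ Finset.range (n + 2), ((n + 1).choose j : ℝ) * g j
      = ∑ j ∈ Finset.range (n + 1), (n.choose j : ℝ) * g j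
        + ∑ j ∈ Finset.range (n + 1), (n.choose j : ℝ) * g (j + 1) := by
  rw [Finset.sum_range_succ' (fun j => ((n + 1).choose j : ℝ) * g j) (n + 1)]
  simp only [Nat.choose_succ_succ, Nat.cast_add, add_mul, Nat.choose_zero_right,
    Nat.cast_one, one_mul]
  rw [Finset.sum_add_distrib]
  have h2 : ∑ j ∈ Finset.range (n + 1), (n.choose (j + 1) : ℝ) * g (j + 1) + g 0
      = ∑ j ∈ Finset.range (n + 1), (n.choose j : ℝ) * g j := by
    have := Finset.sum_range_succ' (fun j => (n.choose j : ℝ) * g j) (n + 1)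
    simp only [Nat.choose_zero_right, Nat.cast_one, one_mul] at this
    rw [← this, Finset.sum_range_succ, Nat.choose_succ_self]
    simp
  linarith [h2]

private lemma aux_sum (n : ℕ) : ∀ k : ℕ,
    ∑ j ∈ Finset.range (n + 1),
        (n.choose j : ℝ) * ((-1) ^ j * ((2 * (j + k)).choose (j + k) : ℝ) / 4 ^ (j + k)) =
      ((2 * n).choose n : ℝ) * (2 * k).factorial * n.factorial /
        (4 ^ (n + k) * k.factorial * (n + k).factorial) := by
  induction n with
  | zero =>
    intro k
    have h : (2 * k).choose k * k.factorial * k.factorial = (2 * k).factorial := by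
      have h2 := Nat.choose_mul_factorial_mul_factorial (show k ≤ 2 * k by omega)
      simpa [show 2 * k - k = k by omega] using h2
    simp only [Finset.sum_range_one, Nat.choose_zero_right, Nat.cast_one, one_mul,
      pow_zero, zero_add, Nat.factorial_zero, mul_one]
    have h4 : (0:ℝ) < 4 ^ k := by positivity
    have hk : (0:ℝ) < (k.factorial : ℝ) := by exact_mod_cast k.factorial_pos
    have h' : ((2 * k).factorial : ℝ) = ((2 * k).choose k : ℝ) * k.factorial * k.factorial := by
      exact_mod_cast h.symm
    rw [h']
    field_simp
  | succ n ih =>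
    intro k
    have hps := pascal_sum_real n
      (fun j => (-1) ^ j * ((2 * (j + k)).choose (j + k) : ℝ) / 4 ^ (j + k))
    rw [hps]
    have hshift : ∑ j ∈ Finset.range (n + 1), (n.choose j : ℝ) *
        ((-1) ^ (j + 1) * ((2 * (j + 1 + k)).choose (j + 1 + k) : ℝ) / 4 ^ (j + 1 + k))
      = - ∑ j ∈ Finset.range (n + 1), (n.choose j : ℝ) *
        ((-1) ^ j * ((2 * (j + (k + 1))).choose (j + (k + 1)) : ℝ) / 4 ^ (j + (k + 1))) := by
      rw [← Finset.sum_neg_distrib]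
      apply Finset.sum_congr rfl
      intro j _
      have e : j + 1 + k = j + (k + 1) := by omega
      rw [e, pow_succ]
      ring
    rw [hshift, ih k, ih (k + 1)]
    have hC : ((2 * (n + 1)).choose (n + 1) : ℝ) * (n + 1)
        = 2 * (2 * n + 1) * ((2 * n).choose n : ℝ) := by
      have := Nat.succ_mul_centralBinom_succ n
      unfold Nat.centralBinom at this
      have := congrArg (Nat.cast (R := ℝ)) this
      push_cast at this
      linarith
    have hC' : ((2 * (n + 1)).choose (n + 1) : ℝ)
        = 2 * (2 * n + 1) * ((2 * n).choose n : ℝ) / (n + 1) := by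
      field_simp
      linarith [hC]
    have hf1 : ((2 * (k + 1)).factorial : ℝ)
        = (2 * k + 2) * ((2 * k + 1) * (2 * k).factorial) := by
      have e : 2 * (k + 1) = (2 * k + 1) + 1 := by ring
      rw [e, Nat.factorial_succ, Nat.factorial_succ]
      push_cast
      ring
    have hf2 : ((k + 1).factorial : ℝ) = (k + 1) * k.factorial := by
      rw [Nat.factorial_succ]; push_cast; ring
    have hf3 : ((n + (k + 1)).factorial : ℝ) = (n + k + 1) * (n + k).factorial := by
      have e : n + (k + 1) = (n + k) + 1 := by omega
      rw [e, Nat.factorial_succ]; push_cast; ring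
    have hf3' : ((n + 1 + k).factorial : ℝ) = (n + k + 1) * (n + k).factorial := by
      have e : n + 1 + k = (n + k) + 1 := by omega
      rw [e, Nat.factorial_succ]; push_cast; ring
    have hf4 : ((n + 1).factorial : ℝ) = (n + 1) * n.factorial := by
      rw [Nat.factorial_succ]; push_cast; ring
    have hp1 : (4 : ℝ) ^ (n + (k + 1)) = 4 ^ (n + k) * 4 := by
      rw [show n + (k + 1) = (n + k) + 1 by omega, pow_succ]
    have hp2 : (4 : ℝ) ^ (n + 1 + k) = 4 ^ (n + k) * 4 := by
      rw [show n + 1 + k = (n + k) + 1 by omega, pow_succ]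
    rw [hC', hf1, hf2, hf3, hf3', hf4, hp1, hp2]
    have h4 : (0:ℝ) < 4 ^ (n + k) := by positivity
    have hk : (0:ℝ) < (k.factorial : ℝ) := by exact_mod_cast k.factorial_pos
    have hnk : (0:ℝ) < ((n + k).factorial : ℝ) := by exact_mod_cast (n + k).factorial_pos
    have hk1 : (0:ℝ) < (k:ℝ) + 1 := by positivity
    have hn1 : (0:ℝ) < (n:ℝ) + 1 := by positivity
    have hnk1 : (0:ℝ) < (n:ℝ) + k + 1 := by positivity
    field_simp
    ring

/-- For every `n ≥ 1`, `Σ_{j=0}^n C(n,j) C(2j,j) (-1/4)^j = C(2n,n)/4^n`. -/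
theorem inner_sum_identity (n : ℕ) (hn : 1 ≤ n) :
    ∑ j ∈ Finset.range (n + 1),
        (n.choose j : ℝ) * ((2 * j).choose j : ℝ) * (-1 / 4 : ℝ) ^ j =
      ((2 * n).choose n : ℝ) / 4 ^ n := by
  have h := aux_sum n 0
  simp only [Nat.add_zero, Nat.mul_zero, Nat.factorial_zero, Nat.cast_one, mul_one, one_mul] at h
  have hfac : ((n.factorial : ℝ)) ≠ 0 := by
    exact_mod_cast n.factorial_pos.ne'
  have h2 : ((2 * n).choose n : ℝ) * n.factorial / (4 ^ n * n.factorial)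
      = ((2 * n).choose n : ℝ) / 4 ^ n := by
    field_simp
  rw [h2] at h
  rw [← h]
  apply Finset.sum_congr rfl
  intro j _
  rw [div_pow]
  ring
end

section
/- Let c_n = C(n, n/2)/2^n for even n and c_n = 0 for odd n (equivalently, c_n is the constant coefficient of (1 − (1/2)(1+a)(1+a⁻¹))^n). Then Σ_{n=1}^{∞} (1/n)·c_n = Σ_{n=1}^{∞} (1/(2n))·C(2n,n)/4^n = ln 2 = 2·ln√2. -/
open Finset Filter Topology MeasureTheory intervalIntegral

noncomputable abbrev cb (n : ℕ) : ℝ := (Nat.centralBinom n : ℝ)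
noncomputable abbrev pp (n : ℕ) : ℝ := cb n / 4 ^ n
noncomputable def phi (t : ℝ) : ℝ := 1 / (2 * Real.sqrt (1 - t) * (1 + Real.sqrt (1 - t)))


lemma cb_rec (n : ℕ) : (n + 1 : ℝ) * cb (n + 1) = 2 * (2 * n + 1) * cb n := by
  have h := Nat.succ_mul_centralBinom_succ n
  have h2 := congrArg (fun k : ℕ => (k : ℝ)) h
  push_cast at h2
  linarith [h2]

lemma convT (m : ℕ) : 2 * ∑ i ∈ range (m + 1), (i : ℝ) * cb i * cb (m - i)
    = m * ∑ i ∈ range (m + 1), cb i * cb (m - i) := by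
  have hrefl : ∑ i ∈ range (m + 1), (i : ℝ) * cb i * cb (m - i)
      = ∑ i ∈ range (m + 1), ((m - i : ℕ) : ℝ) * cb (m - i) * cb i := by
    rw [← Finset.sum_range_reflect (fun i => (i : ℝ) * cb i * cb (m - i)) (m + 1)]
    apply Finset.sum_congr rfl
    intro i hi
    simp only [mem_range] at hi
    have h1 : m + 1 - 1 - i = m - i := by omega
    have h2 : m - (m - i) = i := by omega
    rw [h1, h2]
  calc 2 * ∑ i ∈ range (m + 1), (i : ℝ) * cb i * cb (m - i)
      = ∑ i ∈ range (m + 1), (((i : ℝ) + ((m - i : ℕ) : ℝ)) * (cb i * cb (m - i))) := by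
        rw [two_mul]; nth_rewrite 2 [hrefl]
        rw [← Finset.sum_add_distrib]
        exact Finset.sum_congr rfl fun i _ => by ring
    _ = m * ∑ i ∈ range (m + 1), cb i * cb (m - i) := by
        rw [Finset.mul_sum]
        apply Finset.sum_congr rfl
        intro i hi
        simp only [mem_range] at hi
        have : ((m - i : ℕ) : ℝ) = (m : ℝ) - (i : ℝ) := by
          have : i ≤ m := by omega
          exact Nat.cast_sub this
        rw [this]; ring

lemma convTsucc (n : ℕ) : ∑ i ∈ range (n + 2), (i : ℝ) * cb i * cb (n + 1 - i)
    = 4 * ∑ i ∈ range (n + 1), (i : ℝ) * cb i * cb (n - i)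
      + 2 * ∑ i ∈ range (n + 1), cb i * cb (n - i) := by
  rw [Finset.sum_range_succ' (fun i => (i : ℝ) * cb i * cb (n + 1 - i)) (n + 1)]
  simp only [Nat.cast_zero, zero_mul, add_zero]
  have : ∀ j ∈ range (n + 1), ((j + 1 : ℕ) : ℝ) * cb (j + 1) * cb (n + 1 - (j + 1))
      = 4 * ((j : ℝ) * cb j * cb (n - j)) + 2 * (cb j * cb (n - j)) := by
    intro j hj
    have hidx : n + 1 - (j + 1) = n - j := by omega
    rw [hidx]
    have h := cb_rec j
    have h' := congrArg (· * cb (n - j)) h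
    push_cast
    nlinarith [h']
  rw [Finset.sum_congr rfl this, Finset.sum_add_distrib, ← Finset.mul_sum, ← Finset.mul_sum]

lemma conv_id (n : ℕ) : ∑ i ∈ range (n + 1), cb i * cb (n - i) = 4 ^ n := by
  induction n with
  | zero => simp [cb, Nat.centralBinom]
  | succ n ih =>
    have h1 := convT (n + 1)
    have h2 := convT n
    have h3 := convTsucc n
    have hn1 : ((n + 1 : ℕ) : ℝ) = (n : ℝ) + 1 := by push_cast; ring
    rw [show n + 1 + 1 = n + 2 from rfl] at h1
    rw [hn1] at h1
    have key : ((n : ℝ) + 1) * ∑ i ∈ range (n + 2), cb i * cb (n + 1 - i)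
        = 4 * ((n : ℝ) + 1) * ∑ i ∈ range (n + 1), cb i * cb (n - i) := by
      nlinarith [h1, h2, h3]
    have hne : (n : ℝ) + 1 ≠ 0 := by positivity
    have key' : ((n : ℝ) + 1) * ∑ i ∈ range (n + 2), cb i * cb (n + 1 - i)
        = ((n : ℝ) + 1) * (4 * ∑ i ∈ range (n + 1), cb i * cb (n - i)) := by linarith [key]
    have hc := mul_left_cancel₀ hne key'
    show ∑ i ∈ range (n + 2), cb i * cb (n + 1 - i) = 4 ^ (n + 1)
    rw [hc, ih]; ring


lemma cb_pos (n : ℕ) : 0 < cb n := by exact_mod_cast Nat.centralBinom_pos n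

lemma pp_pos (n : ℕ) : 0 < pp n := by
  have := cb_pos n
  simp only [pp]
  positivity

lemma pp_convolution (n : ℕ) : ∑ i ∈ range (n + 1), pp i * pp (n - i) = 1 := by
  have key : ∀ i ∈ range (n + 1), pp i * pp (n - i) = cb i * cb (n - i) * ((4:ℝ) ^ n)⁻¹ := by
    intro i hi
    simp only [mem_range] at hi
    have h4n : (4 : ℝ) ^ n = 4 ^ i * 4 ^ (n - i) := by
      rw [← pow_add]; congr 1; omega
    simp only [pp]
    rw [h4n]
    have hi4 : (4:ℝ) ^ i ≠ 0 := by positivity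
    have hni4 : (4:ℝ) ^ (n - i) ≠ 0 := by positivity
    field_simp
  rw [Finset.sum_congr rfl key, ← Finset.sum_mul, conv_id]
  field_simp

lemma pp_le_one (n : ℕ) : pp n ≤ 1 := by
  have h := conv_id n
  have hterm : cb n * cb (n - n) ≤ 4 ^ n := by
    rw [← h]
    apply Finset.single_le_sum (f := fun i => cb i * cb (n - i))
    · intro i _; positivity
    · simp
  simp only [Nat.sub_self] at hterm
  have hcb0 : cb 0 = 1 := by simp [cb, Nat.centralBinom]
  rw [hcb0, mul_one] at hterm
  rw [pp, div_le_one (by positivity)]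
  exact hterm

lemma summable_pp_pow {t : ℝ} (h0 : 0 ≤ t) (h1 : t < 1) :
    Summable (fun k => pp k * t ^ k) := by
  apply Summable.of_nonneg_of_le (fun k => by positivity)
    (fun k => by
      calc pp k * t ^ k ≤ 1 * t ^ k := by
            apply mul_le_mul_of_nonneg_right (pp_le_one k) (by positivity)
        _ = t ^ k := one_mul _)
  exact summable_geometric_of_lt_one h0 h1

lemma hasSum_pp_pow {t : ℝ} (h0 : 0 ≤ t) (h1 : t < 1) :
    HasSum (fun k => pp k * t ^ k) (1 / Real.sqrt (1 - t)) := by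
  have hs := summable_pp_pow h0 h1
  have hnorm : Summable (fun k => ‖pp k * t ^ k‖) := by
    apply hs.congr
    intro k
    rw [Real.norm_eq_abs, abs_of_nonneg (by positivity)]
  have hF := hs.hasSum
  set F := ∑' k, pp k * t ^ k with hFdef
  -- Cauchy product
  have hcauchy : F * F = ∑' n, ∑ k ∈ range (n + 1), (pp k * t ^ k) * (pp (n - k) * t ^ (n - k)) :=
    tsum_mul_tsum_eq_tsum_sum_range_of_summable_norm hnorm hnorm
  have hinner : ∀ n : ℕ, ∑ k ∈ range (n + 1), (pp k * t ^ k) * (pp (n - k) * t ^ (n - k)) = t ^ n := by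
    intro n
    have : ∀ k ∈ range (n + 1), (pp k * t ^ k) * (pp (n - k) * t ^ (n - k))
        = (pp k * pp (n - k)) * t ^ n := by
      intro k hk
      simp only [mem_range] at hk
      have : t ^ k * t ^ (n - k) = t ^ n := by rw [← pow_add]; congr 1; omega
      rw [← this]; ring
    rw [Finset.sum_congr rfl this, ← Finset.sum_mul, pp_convolution, one_mul]
  have hgeom : ∑' n : ℕ, t ^ n = 1 / (1 - t) := by
    rw [tsum_geometric_of_lt_one h0 h1, one_div]
  have hF2 : F * F = 1 / (1 - t) := by
    rw [hcauchy]
    rw [tsum_congr hinner, hgeom]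
  have hFpos : 0 < F := by
    have := Summable.le_tsum hs 0 (fun i _ => by positivity)
    simp only [pow_zero, mul_one] at this
    calc (0:ℝ) < pp 0 := pp_pos 0
      _ ≤ F := this
  have hFval : F = 1 / Real.sqrt (1 - t) := by
    have h1t : (0:ℝ) < 1 - t := by linarith
    have hsq : Real.sqrt (F * F) = F := Real.sqrt_mul_self hFpos.le
    rw [← hsq, hF2, one_div, Real.sqrt_inv, one_div]
  rw [← hFval]
  exact hF

lemma hasSum_pp_shift {t : ℝ} (h0 : 0 < t) (h1 : t < 1) :
    HasSum (fun k => pp (k + 1) / 2 * t ^ k) (phi t) := by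
  simp only [phi]
  have h := hasSum_pp_pow h0.le h1
  have hsh : HasSum (fun k : ℕ => pp (k + 1) * t ^ (k + 1)) (1 / Real.sqrt (1 - t) - 1) := by
    apply (hasSum_nat_add_iff (f := fun k => pp k * t ^ k) 1).2
    have hsum1 : ∑ i ∈ range 1, pp i * t ^ i = 1 := by
      simp [pp, cb, Nat.centralBinom]
    rw [hsum1]
    rw [sub_add_cancel]
    exact h
  have hdiv := hsh.div_const (2 * t)
  have heq : ∀ k : ℕ, pp (k + 1) * t ^ (k + 1) / (2 * t) = pp (k + 1) / 2 * t ^ k := by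
    intro k
    rw [pow_succ]
    field_simp
  have hval : (1 / Real.sqrt (1 - t) - 1) / (2 * t)
      = 1 / (2 * Real.sqrt (1 - t) * (1 + Real.sqrt (1 - t))) := by
    set s := Real.sqrt (1 - t) with hsdef
    have hspos : 0 < s := Real.sqrt_pos.2 (by linarith)
    have hs2 : s ^ 2 = 1 - t := Real.sq_sqrt (by linarith)
    have h1s : 0 < 1 + s := by linarith
    field_simp
    nlinarith [hs2]
  rw [← hval]
  exact hdiv.congr_fun fun k => (heq k).symm


-- FTC: antiderivative of phi
lemma hasDerivAt_neg_log (t : ℝ) (ht : t < 1) :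
    HasDerivAt (fun u => -Real.log (1 + Real.sqrt (1 - u))) (phi t) t := by
  have h1t : 0 < 1 - t := by linarith
  have hsq : HasDerivAt (fun u : ℝ => Real.sqrt (1 - u)) (-(1 / (2 * Real.sqrt (1 - t)))) t := by
    have hinner : HasDerivAt (fun u : ℝ => 1 - u) (-1) t := by
      simpa using (hasDerivAt_id' t).const_sub (1:ℝ)
    have := (Real.hasDerivAt_sqrt (x := 1 - t) h1t.ne').comp t hinner
    exact this.congr_deriv (by ring)
  have hspos : 0 < Real.sqrt (1 - t) := Real.sqrt_pos.2 h1t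
  have hne : 1 + Real.sqrt (1 - t) ≠ 0 := by positivity
  have hlog := ((hasDerivAt_const t (1:ℝ)).add hsq).log hne
  have := hlog.neg
  refine this.congr_deriv ?_
  rw [phi]
  simp only [Pi.add_apply]
  field_simp
  ring


lemma integral_phi {y : ℝ} (h0 : 0 < y) (h1 : y < 1) :
    ∫ t in (0:ℝ)..y, phi t = Real.log 2 - Real.log (1 + Real.sqrt (1 - y)) := by
  have hderiv : ∀ t ∈ Set.uIcc (0:ℝ) y, HasDerivAt (fun u => -Real.log (1 + Real.sqrt (1 - u))) (phi t) t := by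
    intro t ht
    rw [Set.uIcc_of_le h0.le] at ht
    exact hasDerivAt_neg_log t (lt_of_le_of_lt ht.2 h1)
  have hcont : ContinuousOn phi (Set.uIcc (0:ℝ) y) := by
    rw [Set.uIcc_of_le h0.le]
    apply ContinuousOn.div continuousOn_const
    · apply ContinuousOn.mul
      · exact (continuousOn_const.mul ((Real.continuous_sqrt).comp_continuousOn
          (continuousOn_const.sub continuousOn_id)))
      · exact continuousOn_const.add ((Real.continuous_sqrt).comp_continuousOn
          (continuousOn_const.sub continuousOn_id))
    · intro t ht
      have h1t : 0 < 1 - t := by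
        simp only [Set.mem_Icc] at ht
        linarith [ht.2]
      have := Real.sqrt_pos.2 h1t
      positivity
  rw [intervalIntegral.integral_eq_sub_of_hasDerivAt hderiv
    (hcont.intervalIntegrable)]
  have : Real.sqrt (1 - 0) = 1 := by simp
  rw [this]
  norm_num
  ring

set_option maxHeartbeats 1000000 in
lemma hasSum_partial {y : ℝ} (h0 : 0 < y) (h1 : y < 1) :
    HasSum (fun k : ℕ => pp (k + 1) * y ^ (k + 1) / (2 * (k + 1)))
      (Real.log 2 - Real.log (1 + Real.sqrt (1 - y))) := by
  set μ := volume.restrict (Set.Ioc (0:ℝ) y) with hμ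
  have hint : ∀ k : ℕ, IntegrableOn (fun t => pp (k + 1) / 2 * t ^ k) (Set.Ioc (0:ℝ) y) := by
    intro k
    exact (continuous_const.mul (continuous_pow k)).integrableOn_Ioc
  have hval : ∀ k : ℕ, ∫ t in Set.Ioc (0:ℝ) y, pp (k + 1) / 2 * t ^ k
      = pp (k + 1) * y ^ (k + 1) / (2 * (k + 1)) := by
    intro k
    rw [← intervalIntegral.integral_of_le h0.le, intervalIntegral.integral_const_mul,
      integral_pow]
    have h00 : (0:ℝ) ^ (k + 1) = 0 := by
      exact zero_pow (Nat.succ_ne_zero k)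
    rw [h00, sub_zero, div_mul_div_comm]
  have hnormval : ∀ k : ℕ, ∫ t in Set.Ioc (0:ℝ) y, ‖pp (k + 1) / 2 * t ^ k‖
      = pp (k + 1) * y ^ (k + 1) / (2 * (k + 1)) := by
    intro k
    rw [← hval k]
    apply setIntegral_congr_fun measurableSet_Ioc
    intro t ht
    have ht0 : 0 ≤ t := le_of_lt ht.1
    have hp := (pp_pos (k + 1)).le
    show ‖pp (k + 1) / 2 * t ^ k‖ = pp (k + 1) / 2 * t ^ k
    rw [Real.norm_eq_abs, abs_of_nonneg (by positivity)]
  have hsummable : Summable (fun k : ℕ => ∫ t in Set.Ioc (0:ℝ) y, ‖pp (k + 1) / 2 * t ^ k‖) := by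
    have hb : Summable (fun k : ℕ => (y / 2) * y ^ k) :=
      (summable_geometric_of_lt_one h0.le h1).mul_left _
    refine Summable.of_nonneg_of_le (fun k => ?_) (fun k => ?_) hb
    · rw [hnormval k]; positivity
    · rw [hnormval k]
      calc pp (k + 1) * y ^ (k + 1) / (2 * (k + 1))
          ≤ y ^ (k + 1) / 2 := by
            rw [div_le_div_iff₀ (by positivity) (by norm_num)]
            have hkn : (0:ℝ) ≤ (k:ℝ) := Nat.cast_nonneg k
            nlinarith [pp_le_one (k + 1), pp_pos (k + 1), pow_nonneg h0.le (k + 1)]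
        _ = (y / 2) * y ^ k := by rw [pow_succ]; ring
  have hkey := MeasureTheory.hasSum_integral_of_summable_integral_norm
    (F := fun k (t : ℝ) => pp (k + 1) / 2 * t ^ k) (μ := μ) (fun k => hint k) hsummable
  have htsum : ∀ t ∈ Set.Ioc (0:ℝ) y, (∑' k : ℕ, pp (k + 1) / 2 * t ^ k) = phi t := by
    intro t ht
    exact (hasSum_pp_shift ht.1 (lt_of_le_of_lt ht.2 h1)).tsum_eq
  have hintval : ∫ t, (∑' k : ℕ, pp (k + 1) / 2 * t ^ k) ∂μ
      = Real.log 2 - Real.log (1 + Real.sqrt (1 - y)) := by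
    rw [hμ]
    rw [setIntegral_congr_fun measurableSet_Ioc htsum]
    rw [← intervalIntegral.integral_of_le h0.le]
    exact integral_phi h0 h1
  rw [hintval] at hkey
  have : (fun k : ℕ => ∫ t, pp (k + 1) / 2 * t ^ k ∂μ)
      = fun k : ℕ => pp (k + 1) * y ^ (k + 1) / (2 * (k + 1)) := by
    funext k
    rw [hμ]
    exact hval k
  rwa [this] at hkey


lemma pp_rec (n : ℕ) : 2 * ((n : ℝ) + 1) * pp (n + 1) = (2 * n + 1) * pp n := by
  have h := cb_rec n
  simp only [pp]
  rw [pow_succ]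
  have h4 : (4:ℝ) ^ n ≠ 0 := by positivity
  field_simp
  have h' := congrArg (· * (4:ℝ) ^ n) h
  nlinarith [h']

lemma pp_sq (n : ℕ) : pp n ^ 2 * ((n : ℝ) + 1) ≤ 1 := by
  induction n with
  | zero => simp [pp, cb, Nat.centralBinom]
  | succ n ih =>
    have hrec := pp_rec n
    have h4 : 4 * ((n:ℝ) + 1) ^ 2 * pp (n + 1) ^ 2 = (2 * n + 1) ^ 2 * pp n ^ 2 := by
      calc 4 * ((n:ℝ) + 1) ^ 2 * pp (n + 1) ^ 2 = (2 * ((n:ℝ) + 1) * pp (n + 1)) ^ 2 := by ring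
        _ = ((2 * (n:ℝ) + 1) * pp n) ^ 2 := by rw [hrec]
        _ = (2 * (n:ℝ) + 1) ^ 2 * pp n ^ 2 := by ring
    have hn : (0:ℝ) ≤ (n:ℝ) := Nat.cast_nonneg n
    have hp := pp_pos n
    have hp1 := pp_pos (n + 1)
    have hcast : ((n + 1 : ℕ) : ℝ) = (n : ℝ) + 1 := by push_cast; ring
    rw [hcast]
    nlinarith [h4, ih, sq_nonneg (pp n), sq_nonneg (pp (n+1)),
      mul_le_mul_of_nonneg_left ih (show (0:ℝ) ≤ (2*n+1)^2*((n:ℝ)+2) by positivity)]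

lemma pp_le_inv_sqrt (n : ℕ) : pp n ≤ 1 / Real.sqrt ((n : ℝ) + 1) := by
  have h2 : pp n ^ 2 ≤ 1 / ((n:ℝ) + 1) := by
    rw [le_div_iff₀ (by positivity)]
    exact pp_sq n
  have := Real.sqrt_le_sqrt h2
  rw [Real.sqrt_sq (pp_pos n).le, one_div, Real.sqrt_inv, ← one_div] at this
  exact this

lemma summable_target : Summable (fun k : ℕ => pp (k + 1) / (2 * ((k : ℝ) + 1))) := by
  have hs : Summable (fun n : ℕ => 1 / ((n : ℝ)) ^ ((3:ℝ)/2)) :=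
    Real.summable_one_div_nat_rpow.2 (by norm_num)
  have hs1 : Summable (fun k : ℕ => 1 / (((k + 1 : ℕ) : ℝ)) ^ ((3:ℝ)/2)) :=
    (summable_nat_add_iff 1).2 hs
  refine Summable.of_nonneg_of_le (fun k => by positivity) (fun k => ?_) hs1
  have hcast : (((k + 1 : ℕ)) : ℝ) = (k : ℝ) + 1 := by push_cast; ring
  rw [hcast]
  have hrpow : ((k:ℝ) + 1) ^ ((3:ℝ)/2) = ((k:ℝ) + 1) * Real.sqrt ((k:ℝ) + 1) := by
    rw [show (3:ℝ)/2 = 1 + 1/2 by norm_num, Real.rpow_add (by positivity), Real.rpow_one,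
      ← Real.sqrt_eq_rpow]
  rw [hrpow]
  have hsq : (0:ℝ) < Real.sqrt ((k:ℝ) + 1) := Real.sqrt_pos.2 (by positivity)
  have hb : pp (k + 1) ≤ 1 / Real.sqrt ((k:ℝ) + 1) := by
    have h1 := pp_le_inv_sqrt (k + 1)
    have hc : (((k + 1 : ℕ)) : ℝ) + 1 = (k : ℝ) + 2 := by push_cast; ring
    rw [hc] at h1
    have hmono : Real.sqrt ((k:ℝ) + 1) ≤ Real.sqrt ((k:ℝ) + 2) := Real.sqrt_le_sqrt (by linarith)
    calc pp (k + 1) ≤ 1 / Real.sqrt ((k:ℝ) + 2) := h1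
      _ ≤ 1 / Real.sqrt ((k:ℝ) + 1) := by
          apply one_div_le_one_div_of_le hsq hmono
  rw [div_le_div_iff₀ (by positivity) (by positivity)]
  calc pp (k + 1) * (((k:ℝ) + 1) * Real.sqrt ((k:ℝ) + 1))
      ≤ (1 / Real.sqrt ((k:ℝ) + 1)) * (((k:ℝ) + 1) * Real.sqrt ((k:ℝ) + 1)) := by
        apply mul_le_mul_of_nonneg_right hb (by positivity)
    _ = (k:ℝ) + 1 := by field_simp
    _ ≤ 1 * (2 * ((k:ℝ) + 1)) := by linarith [Nat.cast_nonneg (α := ℝ) k]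

lemma hasSum_target : HasSum (fun k : ℕ => pp (k + 1) / (2 * ((k : ℝ) + 1))) (Real.log 2) := by
  set g : ℕ → ℝ := fun k => pp (k + 1) / (2 * ((k : ℝ) + 1)) with hg
  have hsum := summable_target
  set yj : ℕ → ℝ := fun j => 1 - 1 / ((j : ℝ) + 2) with hyj
  have hy0 : ∀ j, 0 < yj j := by
    intro j
    have : 1 / ((j : ℝ) + 2) ≤ 1 / 2 := by
      apply one_div_le_one_div_of_le (by norm_num)
      have : (0:ℝ) ≤ (j:ℝ) := Nat.cast_nonneg j
      linarith
    simp only [hyj]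
    linarith
  have hy1 : ∀ j, yj j < 1 := by
    intro j
    have : 0 < 1 / ((j : ℝ) + 2) := by positivity
    simp only [hyj]
    linarith
  have hytend : Tendsto yj atTop (𝓝 1) := by
    rw [hyj]
    simp only [one_div]
    have h2 : Tendsto (fun j : ℕ => ((j : ℝ) + 2)⁻¹) atTop (𝓝 0) :=
      Tendsto.inv_tendsto_atTop
        (tendsto_atTop_add_const_right atTop 2 tendsto_natCast_atTop_atTop)
    simpa using tendsto_const_nhds.sub h2 (f := fun _ : ℕ => (1:ℝ))
  -- tsum as function of j tends to tsum g
  have htend1 : Tendsto (fun j => ∑' k, pp (k + 1) * (yj j) ^ (k + 1) / (2 * ((k:ℝ) + 1)))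
      atTop (𝓝 (∑' k, g k)) := by
    apply tendsto_tsum_of_dominated_convergence hsum
    · intro k
      have : Tendsto (fun j => (yj j) ^ (k + 1)) atTop (𝓝 1) := by
        have := hytend.pow (k + 1)
        simpa using this
      have h3 := (this.mul_const (1 / (2 * ((k:ℝ) + 1)))).const_mul (pp (k + 1))
      convert h3 using 2 with j
      · ring
      · ring
    · filter_upwards with j k
      have hyk : (yj j) ^ (k + 1) ≤ 1 := pow_le_one₀ (hy0 j).le (hy1 j).le
      have hp := (pp_pos (k + 1)).le
      have hyp : (0:ℝ) ≤ (yj j) ^ (k + 1) := pow_nonneg (hy0 j).le _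
      rw [Real.norm_eq_abs, abs_of_nonneg (by positivity)]
      show pp (k + 1) * (yj j) ^ (k + 1) / (2 * ((k:ℝ) + 1)) ≤ pp (k + 1) / (2 * ((k : ℝ) + 1))
      rw [div_le_div_iff₀ (by positivity) (by positivity)]
      nlinarith [mul_le_mul_of_nonneg_left hyk hp]
  -- the same sequence tends to log 2
  have htend2 : Tendsto (fun j => ∑' k, pp (k + 1) * (yj j) ^ (k + 1) / (2 * ((k:ℝ) + 1)))
      atTop (𝓝 (Real.log 2)) := by
    have heq : ∀ j, (∑' k, pp (k + 1) * (yj j) ^ (k + 1) / (2 * ((k:ℝ) + 1)))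
        = Real.log 2 - Real.log (1 + Real.sqrt (1 - yj j)) := by
      intro j
      exact (hasSum_partial (hy0 j) (hy1 j)).tsum_eq
    simp only [heq]
    have h1y : Tendsto (fun j => 1 - yj j) atTop (𝓝 0) := by
      have := tendsto_const_nhds.sub hytend (f := fun _ : ℕ => (1:ℝ))
      simpa using this
    have hsqrt : Tendsto (fun j => Real.sqrt (1 - yj j)) atTop (𝓝 0) := by
      have := (Real.continuous_sqrt.tendsto 0).comp h1y
      simpa [Function.comp_def] using this
    have hlog : Tendsto (fun j => Real.log (1 + Real.sqrt (1 - yj j))) atTop (𝓝 0) := by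
      have hadd : Tendsto (fun j => 1 + Real.sqrt (1 - yj j)) atTop (𝓝 1) := by
        have := tendsto_const_nhds.add hsqrt (f := fun _ : ℕ => (1:ℝ))
        simpa using this
      have := ((Real.continuousAt_log (by norm_num)).tendsto).comp hadd
      simpa [Function.comp_def] using this
    have := tendsto_const_nhds.sub hlog (f := fun _ : ℕ => Real.log 2)
    simpa using this
  have : ∑' k, g k = Real.log 2 := tendsto_nhds_unique htend1 htend2
  rw [← this]
  exact hsum.hasSum

/-- `Σ_{n=1}^∞ (1/n) c_n = ln 2` where `c_n = C(n, n/2)/2^n` for even `n` and `0` otherwise. -/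
theorem log_two_eq_series_even :
    HasSum (fun n : ℕ =>
      (1 / (n + 1 : ℝ)) *
        (if Even (n + 1) then ((n + 1).choose ((n + 1) / 2) : ℝ) / 2 ^ (n + 1) else 0))
      (Real.log 2) := by
  set f : ℕ → ℝ := fun n =>
    (1 / (n + 1 : ℝ)) *
      (if Even (n + 1) then ((n + 1).choose ((n + 1) / 2) : ℝ) / 2 ^ (n + 1) else 0) with hf
  have hinj : Function.Injective (fun k : ℕ => 2 * k + 1) := by
    intro a b hab
    simpa using hab
  have hzero : ∀ n, n ∉ Set.range (fun k : ℕ => 2 * k + 1) → f n = 0 := by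
    intro n hn
    have heven : Even n := by
      rcases Nat.even_or_odd n with h | h
      · exact h
      · exfalso
        obtain ⟨m, hm⟩ := h
        exact hn ⟨m, hm.symm⟩
    have : ¬ Even (n + 1) := by
      simpa [Nat.even_add_one] using heven
    simp [hf, this]
  rw [← Function.Injective.hasSum_iff hinj hzero]
  have hcomp : ∀ k : ℕ, (f ∘ fun k : ℕ => 2 * k + 1) k = pp (k + 1) / (2 * ((k : ℝ) + 1)) := by
    intro k
    have heven : Even (2 * k + 1 + 1) := ⟨k + 1, by omega⟩
    have hdiv : (2 * k + 1 + 1) / 2 = k + 1 := by omega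
    have hchoose : (2 * k + 1 + 1).choose ((2 * k + 1 + 1) / 2) = Nat.centralBinom (k + 1) := by
      rw [hdiv, Nat.centralBinom_eq_two_mul_choose]
      congr 1
    simp only [Function.comp_apply, hf, if_pos heven, hchoose]
    have hpow : (2 : ℝ) ^ (2 * k + 1 + 1) = 4 ^ (k + 1) := by
      rw [show (4:ℝ) = 2 ^ 2 by norm_num, ← pow_mul]
      congr 1
    rw [hpow]
    have hcast : ((2 * k + 1 : ℕ) : ℝ) + 1 = 2 * ((k : ℝ) + 1) := by push_cast; ring
    rw [hcast]
    simp only [pp, cb]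
    field_simp
  exact (hasSum_target.congr_fun fun k => hcomp k)
end
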